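/- arXiv:2206.09384 — 3 statements merged into one kernel-verified Lean document; each statement's English description precedes it below -/
import Mathlib

section
/- Let K be a convex body in R^d contained in a ball of radius R, with K = {θ : Aθ ≤ b} for A ∈ R^{m×d}, b ∈ R^m. For u, v in the interior of K with u ≠ v, let p, q be the endpoints of the chord of K through u and v in the order p, u, v, q, and define the cross-ratio distance σ(u,v) = (‖u−v‖·‖p−q‖)/(‖p−u‖·‖v−q‖). Then σ(u,v)² ≥ max( max_{i∈[m]} (aᵢᵀ(u−v))²/(aᵢᵀu − bᵢ)², ‖u−v‖²/‖p−q‖² ). -/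
open Matrix

lemma dotSelf_nonneg {d : ℕ} (x : Fin d → ℝ) : 0 ≤ x ⬝ᵥ x :=
  Finset.sum_nonneg fun _ _ => mul_self_nonneg _

lemma smul_dotSelf {d : ℕ} (c : ℝ) (x : Fin d → ℝ) :
    (c • x) ⬝ᵥ (c • x) = c ^ 2 * (x ⬝ᵥ x) := by
  rw [smul_dotProduct, dotProduct_smul, smul_eq_mul, smul_eq_mul]; ring

lemma sqrt_smul_dotSelf {d : ℕ} (c : ℝ) (x : Fin d → ℝ) :
    Real.sqrt ((c • x) ⬝ᵥ (c • x)) = |c| * Real.sqrt (x ⬝ᵥ x) := by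
  rw [smul_dotSelf, Real.sqrt_mul (sq_nonneg c), Real.sqrt_sq_eq_abs]

lemma key_ineq (α β s t : ℝ) (hα : α ≤ 0) (hβ : β ≤ 0) (hs : 0 < s) (hst : s < t)
    (ht : t < 1) : (s * (1 - t)) ^ 2 * (β - α) ^ 2 ≤ (α + s * (β - α)) ^ 2 := by
  rcases le_total α β with h | h
  · have h1 : 0 ≤ 1 - s * (2 - t) := by nlinarith
    have hY : 0 ≤ s * (1 - t) * (β - α) :=
      mul_nonneg (mul_nonneg hs.le (by linarith)) (by linarith)
    have hXY : s * (1 - t) * (β - α) ≤ -(α + s * (β - α)) := by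
      nlinarith [mul_nonneg h1 (neg_nonneg.2 hα),
        mul_nonneg (mul_nonneg hs.le (by linarith : (0:ℝ) ≤ 2 - t)) (neg_nonneg.2 hβ)]
    nlinarith [hXY, hY]
  · have hY : 0 ≤ s * (1 - t) * (α - β) :=
      mul_nonneg (mul_nonneg hs.le (by linarith)) (by linarith)
    have hXY : s * (1 - t) * (α - β) ≤ -(α + s * (β - α)) := by
      nlinarith [mul_nonneg (by nlinarith : (0:ℝ) ≤ 1 - s * t) (neg_nonneg.2 hα),
        mul_nonneg (mul_nonneg hs.le (by linarith : (0:ℝ) ≤ t)) (neg_nonneg.2 hβ)]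
    nlinarith [hXY, hY]

/-- Cross-ratio distance σ(u,v) = (‖u−v‖·‖p−q‖)/(‖p−u‖·‖v−q‖). -/
noncomputable def crossRatio {d : ℕ} (u v p q : Fin d → ℝ) : ℝ :=
  (Real.sqrt ((u - v) ⬝ᵥ (u - v)) * Real.sqrt ((p - q) ⬝ᵥ (p - q))) /
    (Real.sqrt ((p - u) ⬝ᵥ (p - u)) * Real.sqrt ((v - q) ⬝ᵥ (v - q)))

theorem stmt0 (d m : ℕ) (A : Matrix (Fin m) (Fin d) ℝ) (b : Fin m → ℝ) (R : ℝ)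
    (K : Set (Fin d → ℝ)) (hKdef : K = {θ | ∀ i, A.mulVec θ i ≤ b i})
    (hKR : ∀ x ∈ K, Real.sqrt (x ⬝ᵥ x) ≤ R)
    (u v p q : Fin d → ℝ)
    (hu : u ∈ interior K) (hv : v ∈ interior K) (huv : u ≠ v)
    (hp : p ∈ frontier K) (hq : q ∈ frontier K)
    (s t : ℝ) (hs : 0 < s) (hst : s < t) (ht : t < 1)
    (hus : u = p + s • (q - p)) (hvt : v = p + t • (q - p)) :
    (∀ i : Fin m, (crossRatio u v p q) ^ 2 ≥
        (A.mulVec (u - v) i) ^ 2 / (A.mulVec u i - b i) ^ 2) ∧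
    (crossRatio u v p q) ^ 2 ≥ ((u - v) ⬝ᵥ (u - v)) / ((p - q) ⬝ᵥ (p - q)) := by
  -- basic vector identities
  have huv' : u - v = (s - t) • (q - p) := by rw [hus, hvt]; module
  have hpu : p - u = (-s) • (q - p) := by rw [hus]; module
  have hvq : v - q = (t - 1) • (q - p) := by rw [hvt]; module
  have hpq : p - q = (-1 : ℝ) • (q - p) := by module
  have hqp : q - p ≠ 0 := by
    intro h
    apply huv
    have : u - v = 0 := by rw [huv', h, smul_zero]
    have := sub_eq_zero.mp this
    exact this
  set L : ℝ := (q - p) ⬝ᵥ (q - p) with hLdef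
  have hL : 0 < L :=
    lt_of_le_of_ne (dotSelf_nonneg _) (fun h => hqp (dotProduct_self_eq_zero.mp h.symm))
  have hsL : 0 < Real.sqrt L := Real.sqrt_pos.mpr hL
  -- crossRatio value
  have e1 : Real.sqrt ((u - v) ⬝ᵥ (u - v)) = (t - s) * Real.sqrt L := by
    rw [huv', sqrt_smul_dotSelf, abs_of_nonpos (by linarith : s - t ≤ 0), ← hLdef]; ring
  have e2 : Real.sqrt ((p - q) ⬝ᵥ (p - q)) = Real.sqrt L := by
    rw [hpq, sqrt_smul_dotSelf, ← hLdef]; norm_num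
  have e3 : Real.sqrt ((p - u) ⬝ᵥ (p - u)) = s * Real.sqrt L := by
    rw [hpu, sqrt_smul_dotSelf, abs_of_nonpos (by linarith : -s ≤ 0), ← hLdef]; ring
  have e4 : Real.sqrt ((v - q) ⬝ᵥ (v - q)) = (1 - t) * Real.sqrt L := by
    rw [hvq, sqrt_smul_dotSelf, abs_of_nonpos (by linarith : t - 1 ≤ 0), ← hLdef]; ring
  have hσ : crossRatio u v p q = (t - s) / (s * (1 - t)) := by
    unfold crossRatio
    rw [e1, e2, e3, e4,
      show (t - s) * Real.sqrt L * Real.sqrt L = (t - s) * L by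
        linear_combination (t - s) * Real.mul_self_sqrt hL.le,
      show s * Real.sqrt L * ((1 - t) * Real.sqrt L) = (s * (1 - t)) * L by
        linear_combination (s * (1 - t)) * Real.mul_self_sqrt hL.le,
      mul_div_mul_right _ _ hL.ne']
  have hdenpos : 0 < s * (1 - t) := mul_pos hs (by linarith)
  have hσ2 : (crossRatio u v p q) ^ 2 = (t - s) ^ 2 / (s * (1 - t)) ^ 2 := by
    rw [hσ, div_pow]
  -- K is closed
  have hKclosed : IsClosed K := by
    rw [hKdef]
    have : {θ : Fin d → ℝ | ∀ i, A.mulVec θ i ≤ b i} = ⋂ i, {θ | A.mulVec θ i ≤ b i} := by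
      ext; simp
    rw [this]
    refine isClosed_iInter fun i => isClosed_le ?_ continuous_const
    simp only [Matrix.mulVec, dotProduct]
    exact continuous_finset_sum _ fun j _ => continuous_const.mul (continuous_apply j)
  have hpK : p ∈ K := hKclosed.frontier_subset hp
  have hqK : q ∈ K := hKclosed.frontier_subset hq
  constructor
  · intro i
    have hαle : A.mulVec p i - b i ≤ 0 := by
      have := (hKdef ▸ hpK) i; simpa using sub_nonpos.mpr this
    have hβle : A.mulVec q i - b i ≤ 0 := by
      have := (hKdef ▸ hqK) i; simpa using sub_nonpos.mpr this
    set α : ℝ := A.mulVec p i - b i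
    set β : ℝ := A.mulVec q i - b i
    set c : ℝ := β - α with hcdef
    have hc : c = A.mulVec q i - A.mulVec p i := by simp only [hcdef, α, β]; ring
    have hNum : A.mulVec (u - v) i = (s - t) * c := by
      rw [hc, huv', Matrix.mulVec_smul, Matrix.mulVec_sub]
      simp [smul_eq_mul]; try ring
    have hDen : A.mulVec u i - b i = α + s * c := by
      rw [hc, hus, Matrix.mulVec_add, Matrix.mulVec_smul, Matrix.mulVec_sub]
      simp only [Pi.add_apply, Pi.smul_apply, Pi.sub_apply, smul_eq_mul]
      simp only [α]; try ring
    have hkey : (s * (1 - t)) ^ 2 * c ^ 2 ≤ (α + s * c) ^ 2 :=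
      key_ineq α β s t hαle hβle hs hst ht
    by_cases hc0 : c = 0
    · rw [hNum, hc0, mul_zero]
      simp only [ne_eq, zero_pow, OfNat.ofNat_ne_zero, not_false_eq_true, zero_div]
      positivity
    · rw [hNum, hDen, hσ2]
      have hpos : 0 < (s * (1 - t)) ^ 2 * c ^ 2 := by positivity
      have hDpos : 0 < (α + s * c) ^ 2 := lt_of_lt_of_le hpos hkey
      have h1 : ((s - t) * c) ^ 2 / (α + s * c) ^ 2
          ≤ ((s - t) * c) ^ 2 / ((s * (1 - t)) ^ 2 * c ^ 2) :=
        div_le_div_of_nonneg_left (sq_nonneg _) hpos hkey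
      have h2 : ((s - t) * c) ^ 2 / ((s * (1 - t)) ^ 2 * c ^ 2)
          = (t - s) ^ 2 / (s * (1 - t)) ^ 2 := by
        field_simp
        ring
      rw [← h2]
      exact h1
  · -- second part
    have hRHS : ((u - v) ⬝ᵥ (u - v)) / ((p - q) ⬝ᵥ (p - q)) = (s - t) ^ 2 := by
      rw [huv', hpq, smul_dotSelf, smul_dotSelf, ← hLdef]
      field_simp
    rw [hRHS, hσ2, ge_iff_le, le_div_iff₀ (by positivity)]
    have h0 : s * (1 - t) ≤ 1 := by nlinarith
    have h00 : 0 ≤ s * (1 - t) := by nlinarith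
    have h1 : (s * (1 - t)) ^ 2 ≤ 1 := by
      nlinarith [mul_nonneg (sub_nonneg.2 h0) (by linarith : (0:ℝ) ≤ 1 + s * (1 - t))]
    nlinarith [mul_le_of_le_one_right (sq_nonneg (s - t)) h1]
end

section
/- Let K = {θ ∈ R^d : Aθ ≤ b} and for θ ∈ Int(K) let Φ(θ) = α⁻¹ Σ_{i=1}^m aᵢaᵢᵀ/(aᵢᵀθ − bᵢ)² + η⁻¹ I_d. If u, v ∈ Int(K) satisfy ‖u−v‖_{Φ(u)} ≤ 1/(2√α), where ‖w‖_{Φ(u)} = √(wᵀΦ(u)w), then (1 − √α‖u−v‖_{Φ(u)})² Φ(v) ⪯ Φ(u) ⪯ (1 + √α‖u−v‖_{Φ(u)})² Φ(v), where ⪯ denotes the Loewner order on symmetric matrices. -/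
/-!
Write sᵢ(θ) = aᵢᵀθ − bᵢ and ε = √α‖u − v‖_{Φ(u)} ≤ 1/2. The i-th summand of the quadratic form
of Φ(u) at u − v alone gives (aᵢᵀ(u − v))² ≤ ε² sᵢ(u)², i.e. |sᵢ(u) − sᵢ(v)| ≤ ε|sᵢ(u)|, so the
weights sᵢ⁻² of Φ(u) and Φ(v) agree up to the factors (1 ± ε)². Then both differences are
nonnegative combinations of the positive semidefinite matrices aᵢaᵢᵀ and I.
-/

open Matrix

/-- The regularized log-barrier Hessian Φ(θ) = α⁻¹ Σᵢ aᵢaᵢᵀ/(aᵢᵀθ − bᵢ)² + η⁻¹ I. -/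
noncomputable def softPhi {m d : ℕ} (A : Matrix (Fin m) (Fin d) ℝ) (b : Fin m → ℝ)
    (α η : ℝ) (θ : Fin d → ℝ) : Matrix (Fin d) (Fin d) ℝ :=
  α⁻¹ • ∑ i, ((A.mulVec θ i - b i) ^ 2)⁻¹ • vecMulVec (A i) (A i) +
    η⁻¹ • (1 : Matrix (Fin d) (Fin d) ℝ)

/-- The local norm ‖w‖_M = √(wᵀ M w). -/
noncomputable def locNorm {d : ℕ} (M : Matrix (Fin d) (Fin d) ℝ) (w : Fin d → ℝ) : ℝ :=
  Real.sqrt (w ⬝ᵥ M.mulVec w)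

section PosSemidef

variable {ι n : Type*} [Fintype ι] [Fintype n] [DecidableEq n]

theorem posSemidef_smul_sum_smul_vecMulVec_add_smul_one (a : ι → n → ℝ) {c e : ℝ} {w : ι → ℝ}
    (hc : 0 ≤ c) (hw : ∀ i, 0 ≤ w i) (he : 0 ≤ e) :
    (c • ∑ i, w i • vecMulVec (a i) (a i) + e • (1 : Matrix n n ℝ)).PosSemidef :=
  ((posSemidef_sum _ fun i _ => (posSemidef_vecMulVec_self_star (a i)).smul (hw i)).smul hc).add
    (PosSemidef.one.smul he)

end PosSemidef

theorem abs_mem_Icc_of_sq_sub_le {p q ε : ℝ} (hε : 0 ≤ ε)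
    (h : (p - q) ^ 2 ≤ ε ^ 2 * p ^ 2) : |q| ∈ Set.Icc ((1 - ε) * |p|) ((1 + ε) * |p|) := by
  have hpq : |p - q| ≤ ε * |p| := by
    rw [← abs_of_nonneg hε, ← abs_mul]
    exact sq_le_sq.1 (by rwa [mul_pow])
  constructor <;> linarith [abs_sub_abs_le_abs_sub p q, abs_sub_abs_le_abs_sub q p, abs_sub_comm p q]

theorem one_sub_sq_mul_inv_sq_le_inv_sq {p q ε : ℝ} (hp : p ≠ 0) (hε : 0 ≤ ε) (hε1 : ε < 1)
    (h : (p - q) ^ 2 ≤ ε ^ 2 * p ^ 2) : (1 - ε) ^ 2 * (q ^ 2)⁻¹ ≤ (p ^ 2)⁻¹ := by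
  have hq : (1 - ε) * |p| ≤ |q| := (abs_mem_Icc_of_sq_sub_le hε h).1
  have hq0 : q ≠ 0 := abs_pos.1 (lt_of_lt_of_le (by have := abs_pos.2 hp; nlinarith) hq)
  rw [← div_eq_mul_inv, inv_eq_one_div, div_le_div_iff₀ (by positivity) (by positivity),
    one_mul, ← sq_abs q, ← sq_abs p, ← mul_pow]
  exact pow_le_pow_left₀ (by nlinarith [abs_nonneg p]) hq 2

theorem inv_sq_le_one_add_sq_mul_inv_sq {p q ε : ℝ} (hp : p ≠ 0) (hε : 0 ≤ ε) (hε1 : ε < 1)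
    (h : (p - q) ^ 2 ≤ ε ^ 2 * p ^ 2) : (p ^ 2)⁻¹ ≤ (1 + ε) ^ 2 * (q ^ 2)⁻¹ := by
  obtain ⟨hq, hq'⟩ := abs_mem_Icc_of_sq_sub_le hε h
  have hq0 : q ≠ 0 := abs_pos.1 (lt_of_lt_of_le (by have := abs_pos.2 hp; nlinarith) hq)
  rw [← div_eq_mul_inv, inv_eq_one_div, div_le_div_iff₀ (by positivity) (by positivity),
    one_mul, ← sq_abs q, ← sq_abs p, ← mul_pow]
  exact pow_le_pow_left₀ (abs_nonneg q) hq' 2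

section SoftPhi

variable {m d : ℕ} (A : Matrix (Fin m) (Fin d) ℝ) (b : Fin m → ℝ) (α η : ℝ)

theorem dotProduct_softPhi_mulVec (θ x : Fin d → ℝ) :
    x ⬝ᵥ softPhi A b α η θ *ᵥ x =
      α⁻¹ * ∑ i, (((A *ᵥ θ) i - b i) ^ 2)⁻¹ * (A *ᵥ x) i ^ 2 + η⁻¹ * (x ⬝ᵥ x) := by
  simp only [softPhi, add_mulVec, smul_mulVec, sum_mulVec, vecMulVec_mulVec, one_mulVec,
    dotProduct_add, dotProduct_smul, dotProduct_sum, smul_eq_mul]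
  congr 2
  refine Finset.sum_congr rfl fun i _ => ?_
  rw [op_smul_eq_mul, dotProduct_comm x, ← sq]
  rfl

theorem smul_softPhi_sub_smul_softPhi (κ κ' : ℝ) (θ θ' : Fin d → ℝ) :
    κ' • softPhi A b α η θ - κ • softPhi A b α η θ' =
      α⁻¹ • ∑ i, (κ' * (((A *ᵥ θ) i - b i) ^ 2)⁻¹ - κ * (((A *ᵥ θ') i - b i) ^ 2)⁻¹) •
        vecMulVec (A i) (A i) + (η⁻¹ * (κ' - κ)) • 1 := by
  simp only [softPhi, smul_add, Finset.smul_sum, smul_smul, add_sub_add_comm,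
    ← Finset.sum_sub_distrib, ← sub_smul]
  congr 1
  · exact Finset.sum_congr rfl fun i _ => by congr 1; ring
  · congr 1; ring

theorem softPhi_posSemidef (hα : 0 ≤ α) (hη : 0 ≤ η) (θ : Fin d → ℝ) :
    (softPhi A b α η θ).PosSemidef :=
  posSemidef_smul_sum_smul_vecMulVec_add_smul_one _ (inv_nonneg.2 hα)
    (fun _ => inv_nonneg.2 (sq_nonneg _)) (inv_nonneg.2 hη)

theorem posSemidef_smul_softPhi_sub_smul_softPhi (hα : 0 ≤ α) (hη : 0 ≤ η) {κ κ' : ℝ}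
    {θ θ' : Fin d → ℝ} (hκ : κ ≤ κ')
    (hslack : ∀ i, κ * (((A *ᵥ θ') i - b i) ^ 2)⁻¹ ≤ κ' * (((A *ᵥ θ) i - b i) ^ 2)⁻¹) :
    (κ' • softPhi A b α η θ - κ • softPhi A b α η θ').PosSemidef := by
  rw [smul_softPhi_sub_smul_softPhi]
  exact posSemidef_smul_sum_smul_vecMulVec_add_smul_one _ (inv_nonneg.2 hα)
    (fun i => sub_nonneg.2 (hslack i)) (mul_nonneg (inv_nonneg.2 hη) (sub_nonneg.2 hκ))

theorem sq_mulVec_le_sq_mul_locNorm_softPhi (hα : 0 < α) (hη : 0 ≤ η) {θ : Fin d → ℝ}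
    {i : Fin m} (hθ : (A *ᵥ θ) i ≠ b i) (x : Fin d → ℝ) :
    (A *ᵥ x) i ^ 2 ≤ (√α * locNorm (softPhi A b α η θ) x) ^ 2 * ((A *ᵥ θ) i - b i) ^ 2 := by
  have hs : (A *ᵥ θ) i - b i ≠ 0 := sub_ne_zero.2 hθ
  have hq : 0 ≤ x ⬝ᵥ softPhi A b α η θ *ᵥ x :=
    (softPhi_posSemidef A b α η hα.le hη θ).dotProduct_mulVec_nonneg x
  have hterm : α⁻¹ * ((((A *ᵥ θ) i - b i) ^ 2)⁻¹ * (A *ᵥ x) i ^ 2) ≤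
      x ⬝ᵥ softPhi A b α η θ *ᵥ x := by
    rw [dotProduct_softPhi_mulVec]
    have hi := Finset.single_le_sum (f := fun j => (((A *ᵥ θ) j - b j) ^ 2)⁻¹ * (A *ᵥ x) j ^ 2)
      (fun j _ => by positivity) (Finset.mem_univ i)
    have hxx : 0 ≤ η⁻¹ * (x ⬝ᵥ x) := mul_nonneg (inv_nonneg.2 hη) (dotProduct_self_star_nonneg x)
    have := mul_le_mul_of_nonneg_left hi (inv_nonneg.2 hα.le)
    linarith
  rw [mul_pow, Real.sq_sqrt hα.le, locNorm, Real.sq_sqrt hq]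
  calc (A *ᵥ x) i ^ 2
      = α * (α⁻¹ * ((((A *ᵥ θ) i - b i) ^ 2)⁻¹ * (A *ᵥ x) i ^ 2)) * ((A *ᵥ θ) i - b i) ^ 2 := by
        field_simp
    _ ≤ α * (x ⬝ᵥ softPhi A b α η θ *ᵥ x) * ((A *ᵥ θ) i - b i) ^ 2 := by gcongr

end SoftPhi

theorem stmt2_general (d m : ℕ) (A : Matrix (Fin m) (Fin d) ℝ) (b : Fin m → ℝ) (α η : ℝ)
    (hα : 0 < α) (hη : 0 < η)
    (u v : Fin d → ℝ)
    (hu : ∀ i, A.mulVec u i < b i)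
    (hclose : locNorm (softPhi A b α η u) (u - v) ≤ 1 / (2 * Real.sqrt α)) :
    ((softPhi A b α η u) -
      (1 - Real.sqrt α * locNorm (softPhi A b α η u) (u - v)) ^ 2 •
        (softPhi A b α η v)).PosSemidef ∧
    ((1 + Real.sqrt α * locNorm (softPhi A b α η u) (u - v)) ^ 2 •
        (softPhi A b α η v) - (softPhi A b α η u)).PosSemidef := by
  set ε := √α * locNorm (softPhi A b α η u) (u - v)
  have hε0 : 0 ≤ ε := mul_nonneg (Real.sqrt_nonneg α) (Real.sqrt_nonneg _)
  have hε1 : ε < 1 := by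
    have hsqrt : 0 < √α := Real.sqrt_pos.2 hα
    calc ε ≤ √α * (1 / (2 * √α)) := mul_le_mul_of_nonneg_left hclose hsqrt.le
      _ < 1 := by field_simp; norm_num
  have hslack (i : Fin m) :
      ((A *ᵥ u) i - b i - ((A *ᵥ v) i - b i)) ^ 2 ≤ ε ^ 2 * ((A *ᵥ u) i - b i) ^ 2 := by
    simpa only [mulVec_sub, Pi.sub_apply, sub_sub_sub_cancel_right] using
      sq_mulVec_le_sq_mul_locNorm_softPhi A b α η hα hη.le (hu i).ne (u - v)
  have hu₀ (i : Fin m) : (A *ᵥ u) i - b i ≠ 0 := sub_ne_zero.2 (hu i).ne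
  constructor
  · simpa only [one_smul] using posSemidef_smul_softPhi_sub_smul_softPhi A b α η hα.le hη.le
      (κ' := 1) (by nlinarith) fun i => by
        simpa only [one_mul] using one_sub_sq_mul_inv_sq_le_inv_sq (hu₀ i) hε0 hε1 (hslack i)
  · simpa only [one_smul] using posSemidef_smul_softPhi_sub_smul_softPhi A b α η hα.le hη.le
      (κ := 1) (by nlinarith) fun i => by
        simpa only [one_mul] using inv_sq_le_one_add_sq_mul_inv_sq (hu₀ i) hε0 hε1 (hslack i)

theorem stmt2 (d m : ℕ) (A : Matrix (Fin m) (Fin d) ℝ) (b : Fin m → ℝ) (α η : ℝ)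
    (hα : 0 < α) (hη : 0 < η)
    (u v : Fin d → ℝ)
    (hu : ∀ i, A.mulVec u i < b i) (hv : ∀ i, A.mulVec v i < b i)
    (hclose : locNorm (softPhi A b α η u) (u - v) ≤ 1 / (2 * Real.sqrt α)) :
    ((softPhi A b α η u) -
      (1 - Real.sqrt α * locNorm (softPhi A b α η u) (u - v)) ^ 2 •
        (softPhi A b α η v)).PosSemidef ∧
    ((1 + Real.sqrt α * locNorm (softPhi A b α η u) (u - v)) ^ 2 •
        (softPhi A b α η v) - (softPhi A b α η u)).PosSemidef :=
  stmt2_general d m A b α η hα hη u v hu hclose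
end

section
/- Suppose φ is a ν'-self-concordant barrier function for a convex body K ⊂ R^d with B(0,r) ⊆ K ⊆ B(0,R) for some R > r > 0, i.e., φ: Int(K) → R is convex, third-order differentiable with φ(x) → +∞ as x → ∂K, satisfies ∇³φ(x)[h,h,h] ≤ 2(∇²φ(x)[h,h])^{3/2}, and hᵀ∇φ(x) ≤ √(ν' hᵀ∇²φ(x)h) for all x ∈ Int(K), h ∈ R^d. Let g(x) = φ(x) + (α/2)xᵀx for some α > 0. Then g is ν-self-concordant with ν = 4ν' + 4αR². -/
/-!
The quadratic `q x = α/2 ⟪x, x⟫` has Hessian `α • id` and vanishing third derivative, so adding it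
to `φ` leaves the third derivative unchanged and only enlarges the Hessian; this gives the
self-concordance inequality for `g`. For the barrier parameter, `|⟪∇q x, h⟫| ≤ α R ‖h‖` on
`K ⊆ B(0, R)`, and `(s + b)² ≤ 2 s² + 2 b²` splits the bound on `⟪∇g x, h⟫` into the two
contributions `ν' D²φ[h, h]` and `α R² · α ‖h‖²`. This needs `ν' ≥ 0`: otherwise the gradient bound
forces `∇φ = 0` on `Int K`, so `φ` is constant there and cannot blow up at the (nonempty) frontier.
-/

open scoped RealInnerProductSpace
open Set Filter Topology

section Quadratic

variable {E : Type*} [NormedAddCommGroup E] [InnerProductSpace ℝ E] (α : ℝ)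

lemma contDiff_half_mul_inner_self {n : WithTop ℕ∞} : ContDiff ℝ n fun x : E ↦ α / 2 * ⟪x, x⟫ :=
  contDiff_const.mul (contDiff_id.inner ℝ contDiff_id)

lemma fderiv_half_mul_inner_self :
    fderiv ℝ (fun x : E ↦ α / 2 * ⟪x, x⟫) = fun x ↦ α • innerSL ℝ x := by
  funext x
  have := (hasStrictFDerivAt_norm_sq x).hasFDerivAt.const_mul (α / 2)
  simp only [← real_inner_self_eq_norm_sq] at this
  rw [this.fderiv]
  ext h
  simp only [smul_apply, coe_innerSL_apply, nsmul_eq_mul, Nat.cast_ofNat, smul_eq_mul]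
  ring

lemma fderiv_fderiv_half_mul_inner_self :
    fderiv ℝ (fderiv ℝ fun x : E ↦ α / 2 * ⟪x, x⟫) = fun _ ↦ α • innerSL ℝ := by
  rw [fderiv_half_mul_inner_self]
  exact funext fun _ ↦ (α • innerSL ℝ (E := E)).fderiv

lemma iteratedFDeriv_two_half_mul_inner_self (x h k : E) :
    iteratedFDeriv ℝ 2 (fun x : E ↦ α / 2 * ⟪x, x⟫) x ![h, k] = α * ⟪h, k⟫ := by
  rw [iteratedFDeriv_two_apply, fderiv_fderiv_half_mul_inner_self]
  rfl

lemma iteratedFDeriv_three_half_mul_inner_self (x : E) :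
    iteratedFDeriv ℝ 3 (fun x : E ↦ α / 2 * ⟪x, x⟫) x = 0 := by
  ext m
  rw [iteratedFDeriv_succ_apply_right, iteratedFDeriv_succ_apply_right,
    fderiv_fderiv_half_mul_inner_self, iteratedFDeriv_const_of_ne one_ne_zero]
  simp

variable {α} {f : E → ℝ} {x : E}

lemma convexOn_half_mul_inner_self {s : Set E} (hs : Convex ℝ s) (hα : 0 ≤ α) :
    ConvexOn ℝ s fun x : E ↦ α / 2 * ⟪x, x⟫ := by
  simp only [real_inner_self_eq_norm_sq]
  exact ((convexOn_univ_norm.pow (fun _ _ ↦ norm_nonneg _) 2).subset (subset_univ s) hs).smul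
    (by positivity : 0 ≤ α / 2)

lemma fderiv_add_half_mul_inner_self_apply (hf : DifferentiableAt ℝ f x) (h : E) :
    fderiv ℝ (fun x ↦ f x + α / 2 * ⟪x, x⟫) x h = fderiv ℝ f x h + α * ⟪x, h⟫ := by
  rw [fderiv_fun_add hf ((contDiff_half_mul_inner_self α).differentiable one_ne_zero x),
    fderiv_half_mul_inner_self]
  rfl

lemma iteratedFDeriv_two_add_half_mul_inner_self (hf : ContDiffAt ℝ 2 f x) (h : E) :
    iteratedFDeriv ℝ 2 (fun x ↦ f x + α / 2 * ⟪x, x⟫) x ![h, h]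
      = iteratedFDeriv ℝ 2 f x ![h, h] + α * ‖h‖ ^ 2 := by
  rw [fun_iteratedFDeriv_add_apply hf (contDiff_half_mul_inner_self α).contDiffAt,
    add_apply, iteratedFDeriv_two_half_mul_inner_self,
    real_inner_self_eq_norm_sq]

lemma iteratedFDeriv_three_add_half_mul_inner_self (hf : ContDiffAt ℝ 3 f x) :
    iteratedFDeriv ℝ 3 (fun x ↦ f x + α / 2 * ⟪x, x⟫) x = iteratedFDeriv ℝ 3 f x := by
  rw [fun_iteratedFDeriv_add_apply hf (contDiff_half_mul_inner_self α).contDiffAt,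
    iteratedFDeriv_three_half_mul_inner_self, add_zero]

end Quadratic

section Barrier

variable {E : Type*} [NormedAddCommGroup E] [NormedSpace ℝ E] {U : Set E} {f : E → ℝ}

/-- Restricted to the line `t ↦ x + t • h`, `f` is convex, so its derivative `t ↦ Df(x + t • h) h`
is monotone, and the derivative of that at `t = 0` is `D²f x [h, h]`. -/
theorem ConvexOn.iteratedFDeriv_two_nonneg (hf : ConvexOn ℝ U f) (hU : IsOpen U)
    (hf2 : ContDiffOn ℝ 2 f U) {x : E} (hx : x ∈ U) (h : E) :
    0 ≤ iteratedFDeriv ℝ 2 f x ![h, h] := by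
  set c : ℝ →ᵃ[ℝ] E := AffineMap.lineMap x (x + h)
  have hc : ∀ t, HasDerivAt c h t := fun t ↦ by
    simpa using AffineMap.hasDerivAt_lineMap (a := x) (b := x + h) (x := t)
  have hc0 : x = c 0 := (AffineMap.lineMap_apply_zero _ _).symm
  have hS : IsOpen (c ⁻¹' U) := hU.preimage AffineMap.lineMap_continuous
  have h0S : (0 : ℝ) ∈ c ⁻¹' U := show c 0 ∈ U from hc0 ▸ hx
  have hfc : ∀ t ∈ c ⁻¹' U, HasDerivAt (f ∘ c) (fderiv ℝ f (c t) h) t := fun t ht ↦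
    ((hf2.contDiffAt (hU.mem_nhds ht)).differentiableAt two_ne_zero).hasFDerivAt.comp_hasDerivAt
      t (hc t)
  have hmono : MonotoneOn (deriv (f ∘ c)) (c ⁻¹' U) :=
    (hf.comp_affineMap c).monotoneOn_deriv fun t ht ↦ (hfc t ht).differentiableAt
  have hf'x : HasFDerivAt (fderiv ℝ f) (fderiv ℝ (fderiv ℝ f) x) x :=
    (((hf2.contDiffAt (hU.mem_nhds hx)).fderiv_right (m := 1) le_rfl).differentiableAt
      one_ne_zero).hasFDerivAt
  have hderiv : HasDerivAt (deriv (f ∘ c)) (fderiv ℝ (fderiv ℝ f) x h h) 0 := by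
    have := (hf'x.comp_hasDerivAt_of_eq 0 (hc 0) hc0).clm_apply (hasDerivAt_const 0 h)
    simp only [Function.comp_apply, map_zero, add_zero] at this
    exact this.congr_of_eventuallyEq <|
      eventually_of_mem (hS.mem_nhds h0S) fun t ht ↦ (hfc t ht).deriv
  have hacc : AccPt (0 : ℝ) (𝓟 (c ⁻¹' U)) := by
    simpa using (PerfectSpace.univ_preperfect 0 (mem_univ 0)).nhds_inter (hS.mem_nhds h0S)
  simpa [iteratedFDeriv_two_apply] using hderiv.hasDerivWithinAt.nonneg_of_monotoneOn hacc hmono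

theorem nonneg_of_fderiv_le_sqrt_of_tendsto_atTop [Nontrivial E] {ν : ℝ} (hf : ConvexOn ℝ U f)
    (hU : IsOpen U) (hUb : Bornology.IsBounded U) (hf2 : ContDiffOn ℝ 2 f U)
    (hbdry : ∀ y ∈ frontier U, Tendsto f (𝓝[U] y) atTop)
    (hν : ∀ x ∈ U, ∀ h, fderiv ℝ f x h ≤ √(ν * iteratedFDeriv ℝ 2 f x ![h, h]))
    {x : E} (hx : x ∈ U) : 0 ≤ ν := by
  by_contra! hneg
  have hDf : ∀ z ∈ U, fderiv ℝ f z = 0 := by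
    intro z hz
    have hle : ∀ v, fderiv ℝ f z v ≤ 0 := fun v ↦ (hν z hz v).trans_eq <| Real.sqrt_eq_zero'.2 <|
      mul_nonpos_of_nonpos_of_nonneg hneg.le (hf.iteratedFDeriv_two_nonneg hU hf2 hz v)
    ext v
    simpa using le_antisymm (hle v) (by simpa using hle (-v))
  have hconst : ∀ z ∈ U, f z = f x := fun z hz ↦
    hf.1.is_const_of_fderivWithin_eq_zero (hf2.differentiableOn two_ne_zero)
      (fun w hw ↦ by rw [fderivWithin_of_isOpen hU hw, hDf w hw]) hz hx
  obtain ⟨y, hy⟩ : (frontier U).Nonempty :=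
    nonempty_frontier_iff.2 ⟨⟨x, hx⟩, fun hU ↦ NormedSpace.unbounded_univ ℝ E (hU ▸ hUb)⟩
  have : (𝓝[U] y).NeBot := mem_closure_iff_nhdsWithin_neBot.1 (frontier_subset_closure hy)
  exact not_tendsto_const_atTop (f x) _
    ((hbdry y hy).congr' (eventually_nhdsWithin_of_forall hconst))

end Barrier

lemma add_le_sqrt_of_le_sqrt {a b ν Q α R n : ℝ} (hν : 0 ≤ ν) (hQ : 0 ≤ Q) (hα : 0 ≤ α)
    (ha : a ≤ √(ν * Q)) (hb : |b| ≤ α * (R * n)) :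
    a + b ≤ √((4 * ν + 4 * α * R ^ 2) * (Q + α * n ^ 2)) := by
  refine (add_le_add_left ha b).trans (Real.le_sqrt_of_sq_le ?_)
  have hs : √(ν * Q) ^ 2 = ν * Q := Real.sq_sqrt (mul_nonneg hν hQ)
  have hb2 : b ^ 2 ≤ (α * (R * n)) ^ 2 := sq_abs b ▸ pow_le_pow_left₀ (abs_nonneg b) hb 2
  nlinarith [sq_nonneg (√(ν * Q) - b), mul_nonneg (mul_nonneg hν hα) (sq_nonneg n),
    mul_nonneg (mul_nonneg hα (sq_nonneg R)) hQ]

theorem stmt4_general (d : ℕ) (K : Set (EuclideanSpace ℝ (Fin d))) (R : ℝ)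
    (hKR : K ⊆ Metric.ball 0 R)
    (ν' : ℝ) (φ : EuclideanSpace ℝ (Fin d) → ℝ)
    -- φ is a ν'-self-concordant barrier for K:
    (hφconv : ConvexOn ℝ (interior K) φ)
    (hφdiff : ContDiffOn ℝ 3 φ (interior K))
    (hφbdry : ∀ y ∈ frontier K, Filter.Tendsto φ (nhdsWithin y (interior K)) Filter.atTop)
    (hφsc : ∀ x ∈ interior K, ∀ h : EuclideanSpace ℝ (Fin d),
      iteratedFDeriv ℝ 3 φ x ![h, h, h] ≤ 2 * (iteratedFDeriv ℝ 2 φ x ![h, h]) ^ ((3 : ℝ) / 2))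
    (hφν : ∀ x ∈ interior K, ∀ h : EuclideanSpace ℝ (Fin d),
      fderiv ℝ φ x h ≤ Real.sqrt (ν' * iteratedFDeriv ℝ 2 φ x ![h, h]))
    (α : ℝ) (hα : 0 < α)
    (g : EuclideanSpace ℝ (Fin d) → ℝ)
    (hg : g = fun x => φ x + (α / 2) * ⟪x, x⟫) :
    -- g is a ν-self-concordant barrier for K with ν = 4ν' + 4αR²:
    ConvexOn ℝ (interior K) g ∧
    ContDiffOn ℝ 3 g (interior K) ∧
    (∀ y ∈ frontier K, Filter.Tendsto g (nhdsWithin y (interior K)) Filter.atTop) ∧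
    (∀ x ∈ interior K, ∀ h : EuclideanSpace ℝ (Fin d),
      iteratedFDeriv ℝ 3 g x ![h, h, h] ≤ 2 * (iteratedFDeriv ℝ 2 g x ![h, h]) ^ ((3 : ℝ) / 2)) ∧
    (∀ x ∈ interior K, ∀ h : EuclideanSpace ℝ (Fin d),
      fderiv ℝ g x h ≤ Real.sqrt ((4 * ν' + 4 * α * R ^ 2) * iteratedFDeriv ℝ 2 g x ![h, h])) := by
  subst hg
  have hφ3 : ∀ x ∈ interior K, ContDiffAt ℝ 3 φ x := fun x hx ↦
    hφdiff.contDiffAt (isOpen_interior.mem_nhds hx)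
  have hφ2 : ∀ x ∈ interior K, ∀ h, 0 ≤ iteratedFDeriv ℝ 2 φ x ![h, h] :=
    fun x hx ↦ hφconv.iteratedFDeriv_two_nonneg isOpen_interior (hφdiff.of_le (by norm_num)) hx
  refine ⟨hφconv.add (convexOn_half_mul_inner_self hφconv.1 hα.le),
    hφdiff.add (contDiff_half_mul_inner_self α).contDiffOn,
    fun y hy ↦ (hφbdry y hy).atTop_add_nonneg fun x ↦ by positivity [real_inner_self_nonneg (x := x)],
    fun x hx h ↦ ?_, fun x hx h ↦ ?_⟩
  · rw [iteratedFDeriv_three_add_half_mul_inner_self (hφ3 x hx),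
      iteratedFDeriv_two_add_half_mul_inner_self ((hφ3 x hx).of_le (by norm_num))]
    refine (hφsc x hx h).trans ?_
    gcongr
    · exact hφ2 x hx h
    · exact le_add_of_nonneg_right (by positivity)
  rcases eq_or_ne h 0 with rfl | hh
  · simp
  have : Nontrivial (EuclideanSpace ℝ (Fin d)) := ⟨⟨h, 0, hh⟩⟩
  have hν' : 0 ≤ ν' := nonneg_of_fderiv_le_sqrt_of_tendsto_atTop hφconv isOpen_interior
    (Metric.isBounded_ball.subset (interior_subset.trans hKR)) (hφdiff.of_le (by norm_num))
    (fun y hy ↦ hφbdry y (frontier_interior_subset hy)) hφν hx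
  have hxR : ‖x‖ ≤ R := (mem_ball_zero_iff.1 (hKR (interior_subset hx))).le
  rw [fderiv_add_half_mul_inner_self_apply ((hφ3 x hx).differentiableAt (by norm_num)),
    iteratedFDeriv_two_add_half_mul_inner_self ((hφ3 x hx).of_le (by norm_num))]
  refine add_le_sqrt_of_le_sqrt hν' (hφ2 x hx h) hα.le (hφν x hx h) ?_
  rw [abs_mul, abs_of_pos hα]
  gcongr
  exact (abs_real_inner_le_norm x h).trans (mul_le_mul_of_nonneg_right hxR (norm_nonneg h))

theorem stmt4 (d : ℕ) (K : Set (EuclideanSpace ℝ (Fin d))) (r R : ℝ)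
    (hr : 0 < r) (hrR : r < R)
    (hKconv : Convex ℝ K)
    (hrK : Metric.ball 0 r ⊆ K) (hKR : K ⊆ Metric.ball 0 R)
    (ν' : ℝ) (φ : EuclideanSpace ℝ (Fin d) → ℝ)
    -- φ is a ν'-self-concordant barrier for K:
    (hφconv : ConvexOn ℝ (interior K) φ)
    (hφdiff : ContDiffOn ℝ 3 φ (interior K))
    (hφbdry : ∀ y ∈ frontier K, Filter.Tendsto φ (nhdsWithin y (interior K)) Filter.atTop)
    (hφsc : ∀ x ∈ interior K, ∀ h : EuclideanSpace ℝ (Fin d),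
      iteratedFDeriv ℝ 3 φ x ![h, h, h] ≤ 2 * (iteratedFDeriv ℝ 2 φ x ![h, h]) ^ ((3 : ℝ) / 2))
    (hφν : ∀ x ∈ interior K, ∀ h : EuclideanSpace ℝ (Fin d),
      fderiv ℝ φ x h ≤ Real.sqrt (ν' * iteratedFDeriv ℝ 2 φ x ![h, h]))
    (α : ℝ) (hα : 0 < α)
    (g : EuclideanSpace ℝ (Fin d) → ℝ)
    (hg : g = fun x => φ x + (α / 2) * ⟪x, x⟫) :
    -- g is a ν-self-concordant barrier for K with ν = 4ν' + 4αR²: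
    ConvexOn ℝ (interior K) g ∧
    ContDiffOn ℝ 3 g (interior K) ∧
    (∀ y ∈ frontier K, Filter.Tendsto g (nhdsWithin y (interior K)) Filter.atTop) ∧
    (∀ x ∈ interior K, ∀ h : EuclideanSpace ℝ (Fin d),
      iteratedFDeriv ℝ 3 g x ![h, h, h] ≤ 2 * (iteratedFDeriv ℝ 2 g x ![h, h]) ^ ((3 : ℝ) / 2)) ∧
    (∀ x ∈ interior K, ∀ h : EuclideanSpace ℝ (Fin d),
      fderiv ℝ g x h ≤ Real.sqrt ((4 * ν' + 4 * α * R ^ 2) * iteratedFDeriv ℝ 2 g x ![h, h])) :=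
  stmt4_general d K R hKR ν' φ hφconv hφdiff hφbdry hφsc hφν α hα g hg
end
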